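/- Let A_Γ be an Artin-Tits group whose Coxeter graph Γ is not connected. Then the graph of irreducible parabolic subgroups C_parab(Γ) has diameter at most 2. -/

import Mathlib

/-- `Π(a,b;k)`: the alternating word `(ab)^{k/2}` if `k` is even, `(ab)^{(k-1)/2} a` if odd. -/
def piWord {S : Type*} (a b : S) (k : ℕ) : FreeGroup S :=
  (FreeGroup.of a * FreeGroup.of b) ^ (k / 2) * (if k % 2 = 1 then FreeGroup.of a else 1)

/-- The Artin-Tits relations associated to the Coxeter-type matrix `m` (with the
conventions `m a b = 2` for commutation and `m a b = 0` for no relation). -/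
def artinRels {S : Type*} (m : S → S → ℕ) : Set (FreeGroup S) :=
  {r | ∃ a b : S, 2 ≤ m a b ∧ r = piWord a b (m a b) * (piWord b a (m a b))⁻¹}

/-- The Coxeter graph of the matrix `m`: two distinct generators are joined by an edge
iff they do not commute (`m a b ≠ 2`, including the case of no relation). -/
def coxeterGraph {S : Type*} (m : S → S → ℕ) : SimpleGraph S where
  Adj a b := a ≠ b ∧ (m a b ≠ 2 ∨ m b a ≠ 2)
  symm := ⟨fun _ _ h => ⟨h.1.symm, h.2.symm⟩⟩
  loopless := ⟨fun _ h => h.1 rfl⟩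

/-- `P` is a proper irreducible parabolic subgroup of the Artin-Tits group `A_Γ`: a
conjugate of the standard parabolic subgroup generated by a nonempty proper subset `X`
of the generators inducing a connected subgraph of the Coxeter graph. -/
def IsProperIrredParabolic {S : Type*} (m : S → S → ℕ)
    (P : Subgroup (PresentedGroup (artinRels m))) : Prop :=
  ∃ (g : PresentedGroup (artinRels m)) (X : Set S), X.Nonempty ∧ X ≠ Set.univ ∧
    ((coxeterGraph m).induce X).Connected ∧
    P = (Subgroup.closure ((PresentedGroup.of : S → PresentedGroup (artinRels m)) '' X)).map
        (MulAut.conj g).toMonoidHom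

/-- The graph of irreducible parabolic subgroups `C_parab(Γ)`: vertices are the proper
irreducible parabolic subgroups; two distinct vertices are adjacent if one contains
the other, or if they intersect trivially and commute elementwise. -/
def parabGraph {S : Type*} (m : S → S → ℕ) :
    SimpleGraph {P : Subgroup (PresentedGroup (artinRels m)) // IsProperIrredParabolic m P} where
  Adj P Q := P ≠ Q ∧
    (P.1 ≤ Q.1 ∨ Q.1 ≤ P.1 ∨
      (P.1 ⊓ Q.1 = ⊥ ∧ ∀ p ∈ P.1, ∀ q ∈ Q.1, Commute p q))
  symm := by
    constructor
    rintro P Q ⟨hne, h⟩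
    refine ⟨hne.symm, ?_⟩
    rcases h with h | h | ⟨hint, hcomm⟩
    · exact Or.inr (Or.inl h)
    · exact Or.inl h
    · exact Or.inr (Or.inr ⟨by rwa [inf_comm], fun q hq p hp => (hcomm p hp q hq).symm⟩)
  loopless := ⟨fun P h => h.1 rfl⟩

/-!
Split the generators as `S = D ⊔ Dᶜ` with `D` a union of connected components of `Γ`. Every
generator outside `D` commutes with every generator in `D`, so `A_D` is normal and
`A_D ∩ A_{Dᶜ} = 1` (the retraction killing the generators outside `D` is the identity on `A_D`).
An irreducible parabolic subgroup lives inside `A_c` for a single component `c`, hence two of them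
supported in different components are adjacent, and two supported in the same component are both
adjacent to `⟨s⟩` for a generator `s` of another component.
-/

open Subgroup SimpleGraph

lemma SimpleGraph.supp_subset_compl_supp_of_not_reachable {V : Type*} {G : SimpleGraph V}
    {x y : V} (h : ¬G.Reachable x y) :
    (G.connectedComponentMk y).supp ⊆ (G.connectedComponentMk x).suppᶜ := by
  intro z hzy hzx
  rw [ConnectedComponent.mem_supp_iff, ConnectedComponent.eq] at hzy hzx
  exact h (hzx.symm.trans hzy)

namespace ArtinTits

variable {S : Type*} {m : S → S → ℕ}

def standardParabolic (m : S → S → ℕ) (X : Set S) : Subgroup (PresentedGroup (artinRels m)) :=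
  closure (PresentedGroup.of '' X)

lemma standardParabolic_mono {X Y : Set S} (h : X ⊆ Y) :
    standardParabolic m X ≤ standardParabolic m Y :=
  closure_mono (Set.image_mono h)

lemma map_piWord {G : Type*} [Group G] (φ : FreeGroup S →* G) (a b : S) (k : ℕ) :
    φ (piWord a b k) =
      (φ (.of a) * φ (.of b)) ^ (k / 2) * (if k % 2 = 1 then φ (.of a) else 1) := by
  simp only [piWord, map_mul, map_pow, apply_ite φ, map_one]

lemma lift_eq_one_of_mem_artinRels {G : Type*} [Group G] (f : S → G)
    (hf : ∀ a b : S, 2 ≤ m a b →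
      (f a * f b) ^ (m a b / 2) * (if m a b % 2 = 1 then f a else 1)
        = (f b * f a) ^ (m a b / 2) * (if m a b % 2 = 1 then f b else 1)) :
    ∀ r ∈ artinRels m, FreeGroup.lift f r = 1 := by
  rintro r ⟨a, b, hab, rfl⟩
  simp only [map_mul, map_inv, map_piWord, FreeGroup.lift_apply_of, hf a b hab, mul_inv_cancel]

lemma braid_relation {a b : S} (hab : 2 ≤ m a b) :
    (.of a * .of b : PresentedGroup (artinRels m)) ^ (m a b / 2) *
        (if m a b % 2 = 1 then .of a else 1)
      = (.of b * .of a) ^ (m a b / 2) * (if m a b % 2 = 1 then .of b else 1) := by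
  have h : PresentedGroup.mk (artinRels m) (piWord a b (m a b)) =
      PresentedGroup.mk (artinRels m) (piWord b a (m a b)) := by
    rw [← mul_inv_eq_one, ← map_inv, ← map_mul]
    exact (QuotientGroup.eq_one_iff _).mpr (subset_normalClosure ⟨a, b, hab, rfl⟩)
  rwa [map_piWord, map_piWord] at h

lemma commute_of_eq_two {a b : S} (h2 : m a b = 2) :
    Commute (PresentedGroup.of a : PresentedGroup (artinRels m)) (.of b) := by
  simpa [h2, Commute, SemiconjBy] using braid_relation (m := m) (a := a) (b := b) h2.ge

def exponentSum (m : S → S → ℕ) : PresentedGroup (artinRels m) →* Multiplicative ℤ :=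
  PresentedGroup.toGroup (f := fun _ => Multiplicative.ofAdd 1)
    (lift_eq_one_of_mem_artinRels (m := m) _ fun _ _ _ => rfl)

lemma of_ne_one (t : S) : (PresentedGroup.of t : PresentedGroup (artinRels m)) ≠ 1 := by
  intro h
  have := congrArg (exponentSum m) h
  rw [map_one, exponentSum, PresentedGroup.toGroup.of] at this
  exact one_ne_zero (congrArg Multiplicative.toAdd this : (1 : ℤ) = 0)

def IsUnionOfComponents (m : S → S → ℕ) (D : Set S) : Prop :=
  ∀ ⦃a b⦄, (coxeterGraph m).Adj a b → a ∈ D → b ∈ D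

lemma isUnionOfComponents_supp (c : (coxeterGraph m).ConnectedComponent) :
    IsUnionOfComponents m c.supp := by
  intro a b hab ha
  rw [ConnectedComponent.mem_supp_iff] at ha ⊢
  rw [← ha, ConnectedComponent.connectedComponentMk_eq_of_adj hab.symm]

namespace IsUnionOfComponents

variable {D : Set S} (hD : IsUnionOfComponents m D)
include hD

lemma eq_two_of_mem_of_notMem {a b : S} (ha : a ∈ D) (hb : b ∉ D) :
    m a b = 2 ∧ m b a = 2 := by
  by_contra h
  exact hb (hD ⟨fun hab => hb (hab ▸ ha), by omega⟩ ha)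

open Classical in
noncomputable def retraction : PresentedGroup (artinRels m) →* PresentedGroup (artinRels m) :=
  PresentedGroup.toGroup (f := fun t => if t ∈ D then .of t else 1)
    (lift_eq_one_of_mem_artinRels _ fun a b hab => by
      by_cases ha : a ∈ D <;> by_cases hb : b ∈ D
      · simpa only [ha, hb, if_true] using braid_relation hab
      · simp [ha, hb, (hD.eq_two_of_mem_of_notMem ha hb).1]
      · simp [ha, hb, (hD.eq_two_of_mem_of_notMem hb ha).2]
      · simp [ha, hb])

lemma retraction_eq_self {x : PresentedGroup (artinRels m)} (hx : x ∈ standardParabolic m D) :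
    hD.retraction x = x := by
  classical
  refine MonoidHom.eqOn_closure (f := hD.retraction) (g := .id _) ?_ hx
  rintro _ ⟨t, ht, rfl⟩
  simp [retraction, ht]

lemma standardParabolic_compl_le_ker_retraction :
    standardParabolic m Dᶜ ≤ hD.retraction.ker := by
  classical
  rw [standardParabolic, closure_le]
  rintro _ ⟨t, ht, rfl⟩
  simp [retraction, Set.notMem_of_mem_compl ht]

lemma standardParabolic_inf_compl : standardParabolic m D ⊓ standardParabolic m Dᶜ = ⊥ := by
  rw [eq_bot_iff]
  rintro x ⟨hxD, hxDc⟩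
  rw [mem_bot, ← hD.retraction_eq_self hxD]
  exact hD.standardParabolic_compl_le_ker_retraction hxDc

lemma standardParabolic_le_centralizer_compl :
    standardParabolic m D ≤ centralizer (standardParabolic m Dᶜ) := by
  rw [standardParabolic, standardParabolic, centralizer_closure, closure_le]
  rintro _ ⟨a, ha, rfl⟩
  rw [SetLike.mem_coe, mem_centralizer_iff]
  rintro _ ⟨b, hb, rfl⟩
  exact (commute_of_eq_two (hD.eq_two_of_mem_of_notMem ha hb).2).eq

lemma standardParabolic_normal : (standardParabolic m D).Normal := by
  rw [← normalizer_eq_top_iff, eq_top_iff]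
  intro x _
  refine PresentedGroup.generated_by _ _ (fun t => ?_) x
  by_cases ht : t ∈ D
  · exact le_normalizer (subset_closure ⟨t, ht, rfl⟩)
  · refine centralizer_le_normalizer _ ?_
    exact le_centralizer_iff.mp hD.standardParabolic_le_centralizer_compl
      (subset_closure ⟨t, ht, rfl⟩)

lemma map_conj_le {X : Set S} (hX : X ⊆ D) (g : PresentedGroup (artinRels m)) :
    (standardParabolic m X).map (MulAut.conj g).toMonoidHom ≤ standardParabolic m D := by
  rintro _ ⟨x, hx, rfl⟩
  exact hD.standardParabolic_normal.conj_mem x (standardParabolic_mono hX hx) g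

lemma parabGraph_adj {P Q : {P // IsProperIrredParabolic m P}} (hP : P.1 ≤ standardParabolic m D)
    (hQ : Q.1 ≤ standardParabolic m Dᶜ) (hP_ne_bot : P.1 ≠ ⊥) : (parabGraph m).Adj P Q := by
  have hinf : P.1 ⊓ Q.1 = ⊥ :=
    eq_bot_iff.mpr ((inf_le_inf hP hQ).trans hD.standardParabolic_inf_compl.le)
  refine ⟨fun hPQ => hP_ne_bot ?_, .inr (.inr ⟨hinf, fun p hp q hq => ?_⟩)⟩
  · rw [← hinf, hPQ, inf_idem]
  · have hp' := hD.standardParabolic_le_centralizer_compl (hP hp)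
    exact (mem_centralizer_iff.mp hp' q (hQ hq)).symm

end IsUnionOfComponents

lemma _root_.IsProperIrredParabolic.ne_bot {P : Subgroup (PresentedGroup (artinRels m))}
    (hP : IsProperIrredParabolic m P) : P ≠ ⊥ := by
  obtain ⟨g, X, ⟨x, hx⟩, -, -, rfl⟩ := hP
  rw [Ne, map_eq_bot_iff_of_injective _ (MulAut.conj g).injective, closure_eq_bot_iff]
  exact fun h => of_ne_one x (h ⟨x, hx, rfl⟩)

lemma _root_.IsProperIrredParabolic.exists_le_standardParabolic_supp
    {P : Subgroup (PresentedGroup (artinRels m))} (hP : IsProperIrredParabolic m P) :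
    ∃ x, P ≤ standardParabolic m ((coxeterGraph m).connectedComponentMk x).supp := by
  obtain ⟨g, X, ⟨x, hx⟩, -, hconn, rfl⟩ := hP
  refine ⟨x, (isUnionOfComponents_supp _).map_conj_le (fun y hy => ?_) g⟩
  rw [ConnectedComponent.mem_supp_iff, ConnectedComponent.eq]
  simpa using (hconn.preconnected ⟨y, hy⟩ ⟨x, hx⟩).map (Embedding.induce X).toHom

lemma isProperIrredParabolic_singleton {s t : S} (hst : s ≠ t) :
    IsProperIrredParabolic m (standardParabolic m {s}) := by
  refine ⟨1, {s}, Set.singleton_nonempty s, fun h => hst (h ▸ Set.mem_univ t).symm, ?_, ?_⟩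
  · rw [induce_singleton_eq_top]
    exact connected_top
  · ext
    simp [standardParabolic]

lemma parabGraph_adj_of_not_reachable {P Q : {P // IsProperIrredParabolic m P}} {x y : S}
    (hP : P.1 ≤ standardParabolic m ((coxeterGraph m).connectedComponentMk x).supp)
    (hQ : Q.1 ≤ standardParabolic m ((coxeterGraph m).connectedComponentMk y).supp)
    (hxy : ¬(coxeterGraph m).Reachable x y) : (parabGraph m).Adj P Q :=
  (isUnionOfComponents_supp _).parabGraph_adj hP
    (hQ.trans (standardParabolic_mono (supp_subset_compl_supp_of_not_reachable hxy))) P.2.ne_bot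

end ArtinTits

open ArtinTits in
theorem statement16_general {S : Type*} (m : S → S → ℕ)
    (hdisc : ¬(coxeterGraph m).Connected) :
    ∀ P Q : {P : Subgroup (PresentedGroup (artinRels m)) // IsProperIrredParabolic m P},
      (parabGraph m).Reachable P Q ∧ (parabGraph m).dist P Q ≤ 2 := by
  intro P Q
  obtain ⟨x, hPx⟩ := P.2.exists_le_standardParabolic_supp
  obtain ⟨y, hQy⟩ := Q.2.exists_le_standardParabolic_supp
  by_cases hxy : (coxeterGraph m).Reachable x y
  · obtain ⟨s, hxs⟩ : ∃ s, ¬(coxeterGraph m).Reachable x s := by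
      by_contra! h
      exact hdisc ((connected_iff_exists_forall_reachable _).mpr ⟨x, h⟩)
    let M : {P // IsProperIrredParabolic m P} :=
      ⟨_, isProperIrredParabolic_singleton fun h : s = x => hxs (h ▸ .rfl)⟩
    have hMs : M.1 ≤ standardParabolic m ((coxeterGraph m).connectedComponentMk s).supp :=
      standardParabolic_mono (Set.singleton_subset_iff.mpr rfl)
    rw [← ConnectedComponent.sound hxy] at hQy
    have hMP := parabGraph_adj_of_not_reachable hMs hPx fun h => hxs h.symm
    have hMQ := parabGraph_adj_of_not_reachable hMs hQy fun h => hxs h.symm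
    let w := hMP.symm.toWalk.append hMQ.toWalk
    exact ⟨w.reachable, (dist_le w).trans (by simp [w])⟩
  · have hPQ := parabGraph_adj_of_not_reachable hPx hQy hxy
    exact ⟨hPQ.reachable, (dist_le hPQ.toWalk).trans (by simp)⟩

/-- if the Coxeter graph `Γ` is not connected, then the graph of
irreducible parabolic subgroups `C_parab(Γ)` has diameter at most `2`. -/
theorem statement16 {S : Type*} (m : S → S → ℕ) (hsym : ∀ a b : S, m a b = m b a)
    (hdisc : ¬(coxeterGraph m).Connected) :
    ∀ P Q : {P : Subgroup (PresentedGroup (artinRels m)) // IsProperIrredParabolic m P},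
      (parabGraph m).Reachable P Q ∧ (parabGraph m).dist P Q ≤ 2 :=
  statement16_general m hdisc
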